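/- arXiv:math/0001117 — 2 statements merged into one kernel-verified Lean document; each statement's English description precedes it below -/
import Mathlib

section
/- Let H = H₊ ⊕ H₋ with ε = π₊ - π₋. Suppose A and B are bounded operators on H whose off-diagonal blocks A₊₋, A₋₊, B₊₋, B₋₊ are Hilbert-Schmidt. Define λ(A,B) := Tr([A₊₊, B₊₊] - ([A,B])₊₊), where the trace is well-defined because [A₊₊,B₊₊] - ([A,B])₊₊ = B₊₋A₋₊ - A₊₋B₋₊ is trace class. Then λ(A,B) = Tr(B₊₋A₋₊ - A₊₋B₋₊) = ¼ Tr(ε [ε,A] [ε,B]). -/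
/-!
Since `π₊ + π₋ = 1`, expanding `⁅A, B⁆` in `2 × 2` blocks shows that `⁅A₊₊, B₊₊⁆ - (⁅A, B⁆)₊₊`
is exactly the off-diagonal contribution `B₊₋A₋₊ - A₊₋B₋₊`, while `⁅ε, A⁆ = 2(A₊₋ - A₋₊)` gives
`ε⁅ε, A⁆⁅ε, B⁆ = 4(A₋₊B₊₋ - A₊₋B₋₊)`. The two traces then agree by cyclicity
`Tr(XY) = Tr(YX)` for Hilbert–Schmidt `X, Y`: both equal the absolutely convergent double sum
`∑ᵢⱼ ⟪eᵢ, X eⱼ⟫⟪eⱼ, Y eᵢ⟫`.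
-/

open scoped InnerProductSpace

section BlockAlgebra

variable {R : Type*} [Ring R] {p q : R}

theorem lie_corner_sub_corner_lie (a b : R) (hp : IsIdempotentElem p) (hpq : p + q = 1) :
    ⁅p * a * p, p * b * p⁆ - p * ⁅a, b⁆ * p =
      (p * b * q) * (q * a * p) - (p * a * q) * (q * b * p) := by
  obtain rfl : q = 1 - p := eq_sub_of_add_eq' hpq
  have hp' : ∀ x : R, p * (p * x) = p * x := fun x => by rw [← mul_assoc, hp.eq]
  simp only [Ring.lie_def, mul_sub, sub_mul, mul_one, one_mul, mul_assoc, hp']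
  abel

theorem sub_mul_lie_mul_lie (a b : R) (hp : IsIdempotentElem p) (hpq : p + q = 1) :
    (p - q) * (⁅p - q, a⁆ * ⁅p - q, b⁆) =
      4 • ((q * a * p) * (p * b * q) - (p * a * q) * (q * b * p)) := by
  obtain rfl : q = 1 - p := eq_sub_of_add_eq' hpq
  have hp' : ∀ x : R, p * (p * x) = p * x := fun x => by rw [← mul_assoc, hp.eq]
  simp only [Ring.lie_def, mul_sub, sub_mul, mul_one, one_mul, mul_assoc, hp', smul_sub]
  abel

end BlockAlgebra

namespace HilbertBasis

variable {𝕜 E ι : Type*} [RCLike 𝕜] [NormedAddCommGroup E] [InnerProductSpace 𝕜 E]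
  (b : HilbertBasis ι 𝕜 E)

theorem hasSum_norm_inner_sq (x : E) : HasSum (fun i => ‖⟪b i, x⟫_𝕜‖ ^ 2) (‖x‖ ^ 2) := by
  have h := b.hasSum_inner_mul_inner x x
  simp only [← inner_conj_symm x (b _), RCLike.conj_mul, inner_self_eq_norm_sq_to_K] at h
  exact_mod_cast h

theorem summable_norm_inner_apply_sq {X : E →L[𝕜] E} (hX : Summable fun i => ‖X (b i)‖ ^ 2) :
    Summable fun p : ι × ι => ‖⟪b p.2, X (b p.1)⟫_𝕜‖ ^ 2 :=
  (summable_prod_of_nonneg fun _ => sq_nonneg _).2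
    ⟨fun i => (b.hasSum_norm_inner_sq (X (b i))).summable,
      hX.congr fun i => (b.hasSum_norm_inner_sq (X (b i))).tsum_eq.symm⟩

variable [CompleteSpace E] {X Y : E →L[𝕜] E}

theorem hasSum_inner_apply_apply (hX : Summable fun i => ‖X (b i)‖ ^ 2)
    (hY : Summable fun i => ‖Y (b i)‖ ^ 2) :
    HasSum (fun i => ⟪b i, X (Y (b i))⟫_𝕜)
      (∑' p : ι × ι, ⟪b p.1, X (b p.2)⟫_𝕜 * ⟪b p.2, Y (b p.1)⟫_𝕜) := by
  have hsum : Summable fun p : ι × ι => ⟪b p.1, X (b p.2)⟫_𝕜 * ⟪b p.2, Y (b p.1)⟫_𝕜 := by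
    refine .of_norm_bounded (((b.summable_norm_inner_apply_sq hX).prod_symm.add
      (b.summable_norm_inner_apply_sq hY)).div_const 2) fun p => ?_
    rw [norm_mul, Prod.fst_swap, Prod.snd_swap]
    linarith [two_mul_le_add_sq ‖⟪b p.1, X (b p.2)⟫_𝕜‖ ‖⟪b p.2, Y (b p.1)⟫_𝕜‖]
  refine hsum.hasSum.prod_fiberwise fun i => ?_
  simpa only [ContinuousLinearMap.adjoint_inner_left] using
    b.hasSum_inner_mul_inner (X.adjoint (b i)) (Y (b i))

theorem tsum_inner_apply_apply_comm (hX : Summable fun i => ‖X (b i)‖ ^ 2)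
    (hY : Summable fun i => ‖Y (b i)‖ ^ 2) :
    ∑' i, ⟪b i, X (Y (b i))⟫_𝕜 = ∑' i, ⟪b i, Y (X (b i))⟫_𝕜 := by
  rw [(b.hasSum_inner_apply_apply hX hY).tsum_eq, (b.hasSum_inner_apply_apply hY hX).tsum_eq,
    ← (Equiv.prodComm ι ι).tsum_eq]
  simp only [Equiv.prodComm_apply, Prod.fst_swap, Prod.snd_swap, mul_comm]

theorem tsum_inner_mul_sub_mul {X' Y' : E →L[𝕜] E} (hX : Summable fun i => ‖X (b i)‖ ^ 2)
    (hY : Summable fun i => ‖Y (b i)‖ ^ 2) (hX' : Summable fun i => ‖X' (b i)‖ ^ 2)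
    (hY' : Summable fun i => ‖Y' (b i)‖ ^ 2) :
    ∑' i, ⟪b i, (X * Y - X' * Y') (b i)⟫_𝕜 =
      ∑' i, ⟪b i, X (Y (b i))⟫_𝕜 - ∑' i, ⟪b i, X' (Y' (b i))⟫_𝕜 := by
  simp only [sub_apply, mul_apply_eq_comp, inner_sub_right]
  exact (b.hasSum_inner_apply_apply hX hY).summable.tsum_sub
    (b.hasSum_inner_apply_apply hX' hY').summable

end HilbertBasis

/-- For an orthogonal decomposition `H = H₊ ⊕ H₋` with `ε = π₊ - π₋`, and bounded operators
`A, B` whose off-diagonal blocks are Hilbert-Schmidt, the operator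
`⁅A₊₊, B₊₊⁆ - (⁅A,B⁆)₊₊` equals `B₊₋A₋₊ - A₊₋B₋₊` (hence is trace class), and
`λ(A,B) := Tr(⁅A₊₊,B₊₊⁆ - (⁅A,B⁆)₊₊) = Tr(B₊₋A₋₊ - A₊₋B₋₊) = ¼ Tr(ε⁅ε,A⁆⁅ε,B⁆)`
(here the product `[ε,A][ε,B]` of commutators), traces computed in a Hilbert basis. -/
theorem stmt_7 (H : Type*) [NormedAddCommGroup H] [InnerProductSpace ℂ H] [CompleteSpace H]
    (K : Submodule ℂ H) [CompleteSpace K]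
    {ι : Type*} (e : HilbertBasis ι ℂ H)
    (Pp Pm eps : H →L[ℂ] H)
    (hPp : Pp = K.subtypeL ∘L K.orthogonalProjection)
    (hPm : Pm = Kᗮ.subtypeL ∘L Kᗮ.orthogonalProjection)
    (heps : eps = Pp - Pm)
    (A B : H →L[ℂ] H)
    (hA1 : Summable fun i => ‖(Pp * A * Pm) (e i)‖ ^ 2)
    (hA2 : Summable fun i => ‖(Pm * A * Pp) (e i)‖ ^ 2)
    (hB1 : Summable fun i => ‖(Pp * B * Pm) (e i)‖ ^ 2)
    (hB2 : Summable fun i => ‖(Pm * B * Pp) (e i)‖ ^ 2) :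
    (⁅Pp * A * Pp, Pp * B * Pp⁆ - Pp * ⁅A, B⁆ * Pp
        = (Pp * B * Pm) * (Pm * A * Pp) - (Pp * A * Pm) * (Pm * B * Pp)) ∧
    (∑' i, ⟪e i, (⁅Pp * A * Pp, Pp * B * Pp⁆ - Pp * ⁅A, B⁆ * Pp) (e i)⟫_ℂ
        = ∑' i, ⟪e i, ((Pp * B * Pm) * (Pm * A * Pp) - (Pp * A * Pm) * (Pm * B * Pp)) (e i)⟫_ℂ) ∧
    (∑' i, ⟪e i, (⁅Pp * A * Pp, Pp * B * Pp⁆ - Pp * ⁅A, B⁆ * Pp) (e i)⟫_ℂ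
        = (1/4 : ℂ) * ∑' i, ⟪e i, (eps * (⁅eps, A⁆ * ⁅eps, B⁆)) (e i)⟫_ℂ) := by
  have hPp_idem : IsIdempotentElem Pp := hPp ▸ K.isIdempotentElem_starProjection
  have hPp_add_Pm : Pp + Pm = 1 := by
    rw [hPp, hPm]
    exact (Submodule.id_eq_sum_starProjection_self_orthogonalComplement (K := K)).symm
  have hcorner := lie_corner_sub_corner_lie A B hPp_idem hPp_add_Pm
  have heps_blocks := heps ▸ sub_mul_lie_mul_lie A B hPp_idem hPp_add_Pm
  refine ⟨hcorner, by rw [hcorner], ?_⟩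
  rw [hcorner, heps_blocks, e.tsum_inner_mul_sub_mul hB1 hA2 hA1 hB2,
    e.tsum_inner_apply_apply_comm hB1 hA2]
  simp only [smul_apply, ← Nat.cast_smul_eq_nsmul ℂ, inner_smul_right,
    tsum_mul_left, e.tsum_inner_mul_sub_mul hA2 hB1 hA1 hB2]
  ring
end

section
/- With the setup of the loop algebra polarization: for U = zⁿ a and V̄ = z^{-p} b (a, b ∈ g, n, p ∈ ℤ with n, p > 0), the operator (ad_{V̄})₊₋ (ad_U)₋₊ - (ad_U)₊₋ (ad_{V̄})₋₊ on H₊ is trace class, and its trace equals 0 if n ≠ p, while for n = p it equals -n · tr_g(c ↦ [a,[b,c]]) = n ⟨a, b⟩, where ⟨·,·⟩ is minus the Killing form. -/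
/-- The operator `ad_{zⁿ a}` on (finitely supported) Fourier modes of the loop algebra:
it maps `c z^q` to `⁅a, c⁆ z^{q+n}`. -/
noncomputable def shiftAd {g : Type*} [LieRing g] [LieAlgebra ℝ g]
    (n : ℤ) (a : g) : (ℤ →₀ g) →ₗ[ℝ] (ℤ →₀ g) :=
  (Finsupp.lmapDomain g ℝ (fun q => q + n)) ∘ₗ
    (Finsupp.mapRange.linearMap (LieAlgebra.ad ℝ g a))

/-- Projection onto nonnegative Fourier modes `H₊`. -/
noncomputable def projPos {g : Type*} [LieRing g] [LieAlgebra ℝ g] :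
    (ℤ →₀ g) →ₗ[ℝ] (ℤ →₀ g) :=
  Finsupp.lsum ℝ (fun q : ℤ =>
    if 0 ≤ q then (Finsupp.lsingle q : g →ₗ[ℝ] (ℤ →₀ g)) else 0)

/-- Projection onto negative Fourier modes `H₋`. -/
noncomputable def projNeg {g : Type*} [LieRing g] [LieAlgebra ℝ g] :
    (ℤ →₀ g) →ₗ[ℝ] (ℤ →₀ g) :=
  Finsupp.lsum ℝ (fun q : ℤ =>
    if q < 0 then (Finsupp.lsingle q : g →ₗ[ℝ] (ℤ →₀ g)) else 0)

/-
On `H₊` the first composition vanishes, since `ad_U` raises degrees and never reaches `H₋`; the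
second sends the mode `z^q v` to the single mode `z^{q-p+n} ⁅a, ⁅b, v⁆⁆`, and only when
`0 ≤ q < p ≤ q + n`. So the diagonal at mode `q` is nonzero only when `n = p` and `0 ≤ q < n`,
where it is `-∑ᵢ Φ(cᵢ, ⁅a, ⁅b, cᵢ⁆⁆) = -tr(ad_a ad_b)` by orthonormality; summing these `n`
equal terms gives `-n tr(ad_a ad_b) = n Φ(a, b)`.
-/

open Finsupp

section LoopModes

variable {g : Type*} [LieRing g] [LieAlgebra ℝ g]

@[simp]
lemma shiftAd_single (n : ℤ) (a : g) (q : ℤ) (v : g) :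
    shiftAd n a (single q v) = single (q + n) ⁅a, v⁆ := by
  simp [shiftAd, mapDomain_single]

@[simp]
lemma projPos_single (q : ℤ) (v : g) :
    (projPos : (ℤ →₀ g) →ₗ[ℝ] _) (single q v) = if 0 ≤ q then single q v else 0 := by
  simp only [projPos, lsum_single]
  split_ifs <;> simp

@[simp]
lemma projNeg_single (q : ℤ) (v : g) :
    (projNeg : (ℤ →₀ g) →ₗ[ℝ] _) (single q v) = if q < 0 then single q v else 0 := by
  simp only [projNeg, lsum_single]
  split_ifs <;> simp

/-- `(ad_{z^{-p} b})₊₋ (ad_{zⁿ a})₋₊ - (ad_{zⁿ a})₊₋ (ad_{z^{-p} b})₋₊` on `H₊`. -/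
noncomputable def polarizedCommutator (n p : ℤ) (a b : g) : (ℤ →₀ g) →ₗ[ℝ] (ℤ →₀ g) :=
  projPos ∘ₗ shiftAd (-p) b ∘ₗ projNeg ∘ₗ shiftAd n a ∘ₗ projPos
    - projPos ∘ₗ shiftAd n a ∘ₗ projNeg ∘ₗ shiftAd (-p) b ∘ₗ projPos

lemma polarizedCommutator_single {n : ℤ} (hn : 0 < n) (p : ℤ) (a b : g) (q : ℤ) (v : g) :
    polarizedCommutator n p a b (single q v) =
      if 0 ≤ q ∧ q < p ∧ p ≤ q + n then -single (q - p + n) ⁅a, ⁅b, v⁆⁆ else 0 := by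
  by_cases hq : 0 ≤ q
  · have hqn : ¬ q + n < 0 := by omega
    by_cases hlow : q < p
    · by_cases hhigh : p ≤ q + n
      · simp [polarizedCommutator, hq, hqn, hlow, hhigh, sub_eq_add_neg, add_right_comm]
      · simp [polarizedCommutator, hq, hqn, hlow, hhigh, show ¬0 ≤ q + -p + n by omega]
    · simp [polarizedCommutator, hq, hqn, hlow]
  · simp [polarizedCommutator, hq]

lemma polarizedCommutator_single_apply_self {n : ℤ} (hn : 0 < n) (p : ℤ) (a b : g)
    (q : ℤ) (v : g) :
    polarizedCommutator n p a b (single q v) q =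
      if n = p ∧ q ∈ Set.Ico 0 p then -⁅a, ⁅b, v⁆⁆ else 0 := by
  rw [polarizedCommutator_single hn]
  simp only [Set.mem_Ico]
  split_ifs with hsupp hdiag hdiag
  · obtain ⟨rfl, -⟩ := hdiag
    rw [sub_add_cancel, Finsupp.neg_apply, single_eq_same]
  · rw [Finsupp.neg_apply, single_eq_of_ne (by omega), neg_zero]
  · exact absurd (by omega) hsupp
  · rfl

end LoopModes

lemma LinearMap.trace_eq_sum_bilin_of_orthonormal {K M ι : Type*} [Field K] [AddCommGroup M]
    [Module K M] [Fintype ι] [DecidableEq ι] (B : M →ₗ[K] M →ₗ[K] K) (c : Module.Basis ι K M)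
    (hortho : ∀ i j, B (c i) (c j) = if i = j then 1 else 0) (f : M →ₗ[K] M) :
    LinearMap.trace K M f = ∑ i, B (c i) (f (c i)) := by
  have hcoord : ∀ i v, B (c i) v = c.repr v i := by
    intro i v
    conv_lhs => rw [← c.sum_repr v]
    simp only [map_sum, map_smul, hortho, smul_eq_mul, mul_ite, mul_one, mul_zero,
      Finset.sum_ite_eq, Finset.mem_univ, if_true]
  simp [LinearMap.trace_eq_matrix_trace K c, Matrix.trace, hcoord, LinearMap.toMatrix_apply]

lemma hasSum_indicator_Ico_const {n : ℤ} (hn : 0 ≤ n) (t : ℝ) :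
    HasSum ((Set.Ico 0 n).indicator fun _ => t) (n * t) := by
  have hsum : HasSum ((Set.Ico 0 n).indicator fun _ => t) (∑ q ∈ Finset.Ico 0 n, _) :=
    hasSum_sum_of_ne_finset_zero fun q hq => Set.indicator_of_notMem (by simpa using hq) _
  convert hsum using 1
  rw [Finset.sum_congr rfl fun q hq => Set.indicator_of_mem (by simpa using hq) _]
  have hcard : ((Finset.Ico 0 n).card : ℝ) = n := by
    rw [Int.card_Ico, sub_zero]; exact_mod_cast Int.toNat_of_nonneg hn
  rw [Finset.sum_const, nsmul_eq_mul, hcard]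

theorem stmt_13_general (g : Type*) [LieRing g] [LieAlgebra ℝ g]
    (Φ : g →ₗ[ℝ] g →ₗ[ℝ] ℝ)
    (hK : ∀ x y : g, Φ x y
      = - LinearMap.trace ℝ g (LinearMap.comp (LieAlgebra.ad ℝ g x) (LieAlgebra.ad ℝ g y)))
    {ι : Type*} [Fintype ι] [DecidableEq ι] (c : Module.Basis ι ℝ g)
    (hortho : ∀ i j, Φ (c i) (c j) = if i = j then 1 else 0)
    (a b : g) (n p : ℤ) (hn : 0 < n) :
    let T : (ℤ →₀ g) →ₗ[ℝ] (ℤ →₀ g) :=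
      projPos ∘ₗ shiftAd (-p) b ∘ₗ projNeg ∘ₗ shiftAd n a ∘ₗ projPos
        - projPos ∘ₗ shiftAd n a ∘ₗ projNeg ∘ₗ shiftAd (-p) b ∘ₗ projPos
    let diag : ℤ → ℝ := fun q => ∑ i, Φ (c i) ((T (Finsupp.single q (c i))) q)
    Summable diag ∧
    (n ≠ p → ∑' q : ℤ, diag q = 0) ∧
    (n = p →
      (∑' q : ℤ, diag q) = (n : ℝ) * Φ a b ∧
      (∑' q : ℤ, diag q) = -(n : ℝ) * LinearMap.trace ℝ g
          (LinearMap.comp (LieAlgebra.ad ℝ g a) (LieAlgebra.ad ℝ g b))) := by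
  intro T diag
  set t := LinearMap.trace ℝ g (LieAlgebra.ad ℝ g a ∘ₗ LieAlgebra.ad ℝ g b)
  have hdiag : ∀ q, diag q = if n = p ∧ q ∈ Set.Ico 0 p then -t else 0 := by
    intro q
    simp only [diag, T, ← polarizedCommutator.eq_def, polarizedCommutator_single_apply_self hn]
    split_ifs
    · simp only [t, LinearMap.trace_eq_sum_bilin_of_orthonormal Φ c hortho, LinearMap.comp_apply,
        LieAlgebra.ad_apply, map_neg, Finset.sum_neg_distrib]
    · simp
  by_cases hnp : n = p
  · subst hnp
    have hsum : HasSum diag (n * -t) := by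
      convert hasSum_indicator_Ico_const hn.le (-t)
      ext q
      simp only [hdiag, Set.indicator_apply, true_and]
    exact ⟨hsum.summable, (absurd rfl ·),
      fun _ => ⟨by rw [hsum.tsum_eq, hK], by rw [hsum.tsum_eq]; ring⟩⟩
  · have hzero : diag = 0 := funext fun q => by simp [hdiag, hnp]
    exact ⟨hzero ▸ summable_zero, fun _ => by simp [hzero], (absurd · hnp)⟩

/-- For `U = zⁿ a` and `V̄ = z^{-p} b` (`n, p > 0`) in the loop algebra of a compact
semisimple `g` (inner product `Φ(a,b) = -tr(ad_a ad_b)`, orthonormal basis `(c i)`), the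
operator `(ad_V̄)₊₋(ad_U)₋₊ - (ad_U)₊₋(ad_V̄)₋₊` on `H₊` is trace class (its diagonal is
summable); its trace is `0` if `n ≠ p`, and for `n = p` it equals
`-n·tr_g(c ↦ ⁅a,⁅b,c⁆⁆) = n Φ(a,b)`. -/
theorem stmt_13 (g : Type*) [LieRing g] [LieAlgebra ℝ g] [FiniteDimensional ℝ g]
    (Φ : g →ₗ[ℝ] g →ₗ[ℝ] ℝ)
    (hsymm : ∀ x y : g, Φ x y = Φ y x)
    (hposdef : ∀ x : g, x ≠ 0 → 0 < Φ x x)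
    (hK : ∀ x y : g, Φ x y
      = - LinearMap.trace ℝ g (LinearMap.comp (LieAlgebra.ad ℝ g x) (LieAlgebra.ad ℝ g y)))
    {ι : Type*} [Fintype ι] [DecidableEq ι] (c : Module.Basis ι ℝ g)
    (hortho : ∀ i j, Φ (c i) (c j) = if i = j then 1 else 0)
    (a b : g) (n p : ℤ) (hn : 0 < n) (hp : 0 < p) :
    let T : (ℤ →₀ g) →ₗ[ℝ] (ℤ →₀ g) :=
      projPos ∘ₗ shiftAd (-p) b ∘ₗ projNeg ∘ₗ shiftAd n a ∘ₗ projPos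
        - projPos ∘ₗ shiftAd n a ∘ₗ projNeg ∘ₗ shiftAd (-p) b ∘ₗ projPos
    let diag : ℤ → ℝ := fun q => ∑ i, Φ (c i) ((T (Finsupp.single q (c i))) q)
    Summable diag ∧
    (n ≠ p → ∑' q : ℤ, diag q = 0) ∧
    (n = p →
      (∑' q : ℤ, diag q) = (n : ℝ) * Φ a b ∧
      (∑' q : ℤ, diag q) = -(n : ℝ) * LinearMap.trace ℝ g
          (LinearMap.comp (LieAlgebra.ad ℝ g a) (LieAlgebra.ad ℝ g b))) :=
  stmt_13_general g Φ hK c hortho a b n p hn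
end
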